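/- Let Θ^1_0, ..., Θ^N_0 be i.i.d. random initializations in R^{P(a)} each having independent coordinates, where a = (a_0,...,a_D) with D ≥ 3, and let each trajectory evolve by gradient descent Θ^n_t = Θ^n_{t-1} - γ_t G^n_t(Θ^n_{t-1}). Then P(all Θ^n_t lie in the inactive set I_a for all n ∈ {1,...,N} and all t ≥ 0) = [1 - Π_{j=2}^{D-1}(1 - Π_{i=1+k_{j-1}}^{k_j} P(Θ^1_{0,i} < 0))]^N, where k_j = Σ_{i=1}^j a_i(a_{i-1}+1). -/

import Mathlib

/-
A hidden layer `j ≥ 2` whose weights and biases are all negative receives nonnegative inputs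
(the ReLU outputs of layer `j - 1`), so it outputs zero on every input; the realization then
does not depend on any parameter of layers `≤ j`. Hence the empirical loss is locally constant
in each coordinate of layer `j`, its partial derivatives there vanish, and gradient descent
never changes that layer: trajectories starting in `I_a` stay there. The event in question is
therefore the event that all `N` initializations lie in `I_a`, whose probability factorizes
over the i.i.d. initializations and, for one initialization, over the disjoint parameter
blocks of the hidden layers.
-/

open MeasureTheory ProbabilityTheory

noncomputable section

/-- `layerSum a j = ∑_{i=1}^{j} a_i (a_{i-1}+1)`, the number of parameters in layers `1,…,j`. -/
def layerSum (a : ℕ → ℕ) (j : ℕ) : ℕ := ∑ i ∈ Finset.Icc 1 j, a i * (a (i - 1) + 1)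

/-- The affine map of a layer with `m` outputs, `n` inputs, parameters read from `θ`
starting at offset `k` (weights row-wise, then biases). -/
def affApply (m n : ℕ) (θ : ℕ → ℝ) (k : ℕ) (y : Fin n → ℝ) : Fin m → ℝ :=
  fun i => (∑ l : Fin n, θ (k + i.val * n + l.val) * y l) + θ (k + m * n + i.val)

/-- Forward pass through the first `j` layers of the network, with componentwise ReLU
applied after each affine layer. -/
def fwd (a : ℕ → ℕ) (θ : ℕ → ℝ) (x : Fin (a 0) → ℝ) : (j : ℕ) → Fin (a j) → ℝ
  | 0 => x
  | j + 1 => fun i => max (affApply (a (j + 1)) (a j) θ (layerSum a j) (fwd a θ x j) i) 0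

/-- The realization `N_a^θ : ℝ^{a 0} → ℝ^{a D}` of the fully connected feedforward ReLU
network with architecture `a = (a 0, …, a D)` and parameters `θ`:
ReLU after each of the hidden layers `1,…,D-1`, linear read-out layer `D`. -/
def realization (a : ℕ → ℕ) (D : ℕ) (θ : ℕ → ℝ) (x : Fin (a 0) → ℝ) : Fin (a D) → ℝ :=
  affApply (a D) (a (D - 1)) θ (layerSum a (D - 1)) (fwd a θ x (D - 1))

/-- All weights and biases of layer `j` (the parameter block with indices in
`[layerSum a (j-1), layerSum a j)`) are strictly negative. -/
def layerNeg (a : ℕ → ℕ) (j : ℕ) (θ : ℕ → ℝ) : Prop :=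
  ∀ i, layerSum a (j - 1) ≤ i → i < layerSum a j → θ i < 0

/-- The inactive set `I_a`: some hidden layer `j` with `1 < j < D` has all its weights and
biases strictly negative. -/
def Inactive (a : ℕ → ℕ) (D : ℕ) (θ : ℕ → ℝ) : Prop :=
  ∃ j, 1 < j ∧ j < D ∧ layerNeg a j θ

end

section Network

variable (a : ℕ → ℕ)

lemma layerSum_mono {p q : ℕ} (h : p ≤ q) : layerSum a p ≤ layerSum a q :=
  Finset.sum_le_sum_of_subset (Finset.Icc_subset_Icc_right h)

lemma layerSum_succ (j : ℕ) :
    layerSum a (j + 1) = layerSum a j + a (j + 1) * (a j + 1) := by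
  rw [layerSum, layerSum, Finset.sum_Icc_succ_top (by omega : 1 ≤ j + 1), Nat.add_sub_cancel]

variable {a}

lemma affApply_congr {m n k : ℕ} {θ θ' : ℕ → ℝ} (h : ∀ i, k ≤ i → θ i = θ' i)
    (y : Fin n → ℝ) : affApply m n θ k y = affApply m n θ' k y := by
  funext r
  simp (disch := omega) only [affApply, h]

lemma affApply_neg_of_nonneg {m n k : ℕ} {θ : ℕ → ℝ} {y : Fin n → ℝ}
    (hθ : ∀ i, k ≤ i → i < k + m * (n + 1) → θ i < 0) (hy : ∀ l, 0 ≤ y l) (r : Fin m) :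
    affApply m n θ k y r < 0 := by
  have hweight : ∀ l : Fin n, θ (k + r * n + l) * y l ≤ 0 := fun l =>
    mul_nonpos_of_nonpos_of_nonneg (hθ _ (by omega) (by nlinarith [r.isLt, l.isLt])).le (hy l)
  have hbias : θ (k + m * n + r) < 0 := hθ _ (by omega) (by nlinarith [r.isLt])
  exact add_neg_of_nonpos_of_neg (Finset.sum_nonpos fun l _ => hweight l) hbias

lemma fwd_succ (θ : ℕ → ℝ) (x : Fin (a 0) → ℝ) (j : ℕ) :
    fwd a θ x (j + 1) =
      fun i => max (affApply (a (j + 1)) (a j) θ (layerSum a j) (fwd a θ x j) i) 0 :=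
  rfl

lemma fwd_nonneg (θ : ℕ → ℝ) (x : Fin (a 0) → ℝ) {j : ℕ} (hj : 1 ≤ j) (i : Fin (a j)) :
    0 ≤ fwd a θ x j i := by
  obtain ⟨p, rfl⟩ : ∃ p, j = p + 1 := ⟨j - 1, by omega⟩
  exact le_max_right _ _

lemma fwd_eq_zero_of_layerNeg {θ : ℕ → ℝ} {j : ℕ} (hj : 2 ≤ j) (hθ : layerNeg a j θ)
    (x : Fin (a 0) → ℝ) : fwd a θ x j = 0 := by
  obtain ⟨p, rfl⟩ : ∃ p, j = p + 1 := ⟨j - 1, by omega⟩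
  have hθ' : ∀ i, layerSum a p ≤ i → i < layerSum a p + a (p + 1) * (a p + 1) → θ i < 0 := by
    simpa [layerNeg, layerSum_succ] using hθ
  funext i
  exact max_eq_right (affApply_neg_of_nonneg hθ' (fwd_nonneg θ x (by omega)) i).le

lemma fwd_congr_of_layerNeg {θ θ' : ℕ → ℝ} {j : ℕ} (hj : 2 ≤ j) (hθ : layerNeg a j θ)
    (hθ' : layerNeg a j θ') (h : ∀ i, layerSum a j ≤ i → θ i = θ' i) (x : Fin (a 0) → ℝ)
    {p : ℕ} (hp : j ≤ p) : fwd a θ x p = fwd a θ' x p := by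
  induction p, hp using Nat.le_induction with
  | base => rw [fwd_eq_zero_of_layerNeg hj hθ, fwd_eq_zero_of_layerNeg hj hθ']
  | succ p hp ih =>
    rw [fwd_succ, fwd_succ, ih,
      affApply_congr fun i hi => h i ((layerSum_mono a hp).trans hi)]

lemma realization_congr_of_layerNeg {D j : ℕ} {θ θ' : ℕ → ℝ} (hj : 2 ≤ j) (hjD : j < D)
    (hθ : layerNeg a j θ) (hθ' : layerNeg a j θ') (h : ∀ i, layerSum a j ≤ i → θ i = θ' i) :
    realization a D θ = realization a D θ' := by
  funext x
  have h' : ∀ i, layerSum a (D - 1) ≤ i → θ i = θ' i :=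
    fun i hi => h i ((layerSum_mono a (by omega)).trans hi)
  rw [realization, realization, fwd_congr_of_layerNeg hj hθ hθ' h x (by omega), affApply_congr h']

lemma realization_update_of_layerNeg {D j i : ℕ} {θ : ℕ → ℝ} (hj : 2 ≤ j) (hjD : j < D)
    (hθ : layerNeg a j θ) (hi : layerSum a (j - 1) ≤ i) (hi' : i < layerSum a j) {s : ℝ}
    (hs : s < 0) : realization a D (Function.update θ i s) = realization a D θ := by
  refine realization_congr_of_layerNeg hj hjD (fun k hk hk' => ?_) hθ
    fun k hk => Function.update_of_ne (by omega) _ _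
  rcases eq_or_ne k i with rfl | hne
  · rwa [Function.update_self]
  · rw [Function.update_of_ne hne]
    exact hθ k hk hk'

end Network

section GradientStep

variable {a : ℕ → ℕ} {D : ℕ} {ℓ : (ℕ → ℝ) → ℝ} {θ g : ℕ → ℝ}

lemma layerNeg.gradient_step {j : ℕ} (hj : 2 ≤ j) (hjD : j < D) (hθ : layerNeg a j θ)
    (hℓ : ∀ θ θ', realization a D θ = realization a D θ' → ℓ θ = ℓ θ')
    (hg : ∀ i, DifferentiableAt ℝ (fun s => ℓ (Function.update θ i s)) (θ i) →
      g i = deriv (fun s => ℓ (Function.update θ i s)) (θ i)) (c : ℝ) :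
    layerNeg a j (fun i => θ i - c * g i) := by
  intro i hi hi'
  have hloc : (fun s => ℓ (Function.update θ i s)) =ᶠ[nhds (θ i)] fun _ => ℓ θ := by
    filter_upwards [Iio_mem_nhds (hθ i hi hi')] with s hs
    exact hℓ _ _ (realization_update_of_layerNeg hj hjD hθ hi hi' hs)
  have hgi : g i = 0 := by
    rw [hg i ((differentiableAt_const _).congr_of_eventuallyEq hloc), hloc.deriv_eq, deriv_const]
  simpa [hgi] using hθ i hi hi'

lemma Inactive.gradient_step (hθ : Inactive a D θ)
    (hℓ : ∀ θ θ', realization a D θ = realization a D θ' → ℓ θ = ℓ θ')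
    (hg : ∀ i, DifferentiableAt ℝ (fun s => ℓ (Function.update θ i s)) (θ i) →
      g i = deriv (fun s => ℓ (Function.update θ i s)) (θ i)) (c : ℝ) :
    Inactive a D (fun i => θ i - c * g i) :=
  let ⟨j, hj, hjD, hθj⟩ := hθ
  ⟨j, hj, hjD, hθj.gradient_step (by omega) hjD hℓ hg c⟩

end GradientStep

namespace ProbabilityTheory

variable {Ω ι κ β : Type*} {mΩ : MeasurableSpace Ω} {mβ : MeasurableSpace β} {μ : Measure Ω}
  {f : ι → Ω → β} {s : ι → Set β}

lemma measurableSet_biInter_preimage_iSup_comap {S : Set ι} {T : Finset ι} (hTS : ↑T ⊆ S)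
    (hs : ∀ i, MeasurableSet (s i)) :
    MeasurableSet[⨆ i ∈ S, mβ.comap (f i)] (⋂ i ∈ T, f i ⁻¹' s i) :=
  MeasurableSet.biInter T.countable_toSet fun i hi =>
    le_biSup (fun i => mβ.comap (f i)) (hTS hi) _ ⟨s i, hs i, rfl⟩

lemma iIndepFun.measure_biInter_compl_biInter (hf : iIndepFun f μ) (hfm : ∀ i, Measurable (f i))
    (hs : ∀ i, MeasurableSet (s i)) {B : κ → Finset ι} {J : Finset κ}
    (hB : (J : Set κ).PairwiseDisjoint B) :
    μ (⋂ j ∈ J, (⋂ i ∈ B j, f i ⁻¹' s i)ᶜ) = ∏ j ∈ J, μ ((⋂ i ∈ B j, f i ⁻¹' s i)ᶜ) := by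
  classical
  induction J using Finset.induction_on with
  | empty => simpa using hf.isProbabilityMeasure.measure_univ
  | insert j J hj ih =>
    rw [Finset.set_biInter_insert, Finset.prod_insert hj, ← ih (hB.subset (by simp))]
    have hdisj : Disjoint (B j : Set ι) (⋃ k ∈ J, (B k : Set ι)) := by
      refine Set.disjoint_iUnion₂_right.2 fun k hk => ?_
      exact Finset.disjoint_coe.2 (hB (by simp) (by simp [hk]) (by rintro rfl; exact hj hk))
    have hind := indep_iSup_of_disjoint (fun i => (hfm i).comap_le) hf.iIndep hdisj
    refine (Indep_iff _ _ μ).1 hind _ _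
      (measurableSet_biInter_preimage_iSup_comap subset_rfl hs).compl ?_
    exact MeasurableSet.biInter J.countable_toSet fun k hk =>
      (measurableSet_biInter_preimage_iSup_comap
        (Set.subset_iUnion₂ (s := fun k (_ : k ∈ J) => (B k : Set ι)) k hk) hs).compl

lemma iIndepFun.measure_biUnion_biInter (hf : iIndepFun f μ)
    (hfm : ∀ i, Measurable (f i)) (hs : ∀ i, MeasurableSet (s i)) {B : κ → Finset ι}
    {J : Finset κ} (hB : (J : Set κ).PairwiseDisjoint B) :
    μ (⋃ j ∈ J, ⋂ i ∈ B j, f i ⁻¹' s i) = 1 - ∏ j ∈ J, (1 - ∏ i ∈ B j, μ (f i ⁻¹' s i)) := by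
  have := hf.isProbabilityMeasure
  have hA : ∀ j, MeasurableSet (⋂ i ∈ B j, f i ⁻¹' s i) := fun j =>
    (B j).measurableSet_biInter fun i _ => hfm i (hs i)
  have hcompl : ∏ j ∈ J, (1 - ∏ i ∈ B j, μ (f i ⁻¹' s i))
      = 1 - μ (⋃ j ∈ J, ⋂ i ∈ B j, f i ⁻¹' s i) := by
    rw [← prob_compl_eq_one_sub (J.measurableSet_biUnion fun j _ => hA j), Set.compl_iUnion₂,
      hf.measure_biInter_compl_biInter hfm hs hB]
    refine Finset.prod_congr rfl fun j _ => ?_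
    rw [prob_compl_eq_one_sub (hA j), hf.meas_biInter fun i _ => ⟨s i, hs i, rfl⟩]
  rw [hcompl, ENNReal.sub_sub_cancel ENNReal.one_ne_top prob_le_one]

lemma iIndepFun.measure_iInter_preimage [Fintype ι] (hf : iIndepFun f μ) {Y : Ω → β}
    (hfY : ∀ i, IdentDistrib (f i) Y μ μ) {S : Set β} (hS : MeasurableSet S) :
    μ (⋂ i, f i ⁻¹' S) = μ (Y ⁻¹' S) ^ Fintype.card ι := by
  rw [hf.meas_iInter fun i => ⟨S, hS, rfl⟩, ← Finset.card_univ, ← Finset.prod_const]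
  exact Finset.prod_congr rfl fun i _ => (hfY i).measure_mem_eq hS

end ProbabilityTheory

section LayerBlocks

variable (a : ℕ → ℕ) (D : ℕ)

def layerBlock (j : ℕ) : Finset (Fin (layerSum a D)) :=
  {i | (i : ℕ) ∈ Finset.Ico (layerSum a (j - 1)) (layerSum a j)}

variable {a D} in
lemma mem_layerBlock {j : ℕ} {i : Fin (layerSum a D)} :
    i ∈ layerBlock a D j ↔ layerSum a (j - 1) ≤ i ∧ i < layerSum a j := by
  simp [layerBlock]

lemma pairwiseDisjoint_layerBlock : (Set.Ici 1).PairwiseDisjoint (layerBlock a D) := by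
  intro j hj j' hj' hne
  refine Finset.disjoint_left.2 fun i hi hi' => ?_
  rw [mem_layerBlock] at hi hi'
  rcases lt_or_gt_of_ne hne with h | h
  · have := layerSum_mono a (show j ≤ j' - 1 by omega)
    omega
  · have := layerSum_mono a (show j' ≤ j - 1 by omega)
    omega

lemma prod_layerBlock {M : Type*} [CommMonoid M] (g : ℕ → M) {j : ℕ} (hj : j ≤ D) :
    ∏ i ∈ layerBlock a D j, g i = ∏ i ∈ Finset.Ico (layerSum a (j - 1)) (layerSum a j), g i := by
  rw [layerBlock, Finset.prod_filter,
    Fin.prod_univ_eq_prod_range (fun i => if i ∈ Finset.Ico _ _ then g i else 1),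
    Finset.prod_ite_mem, Finset.inter_eq_right.2]
  intro i hi
  rw [Finset.mem_Ico] at hi
  exact Finset.mem_range.2 (hi.2.trans_le (layerSum_mono a hj))

lemma setOf_inactive_eq : {θ : ℕ → ℝ | Inactive a D θ} =
    ⋃ j ∈ Finset.Icc 2 (D - 1), ⋂ i ∈ layerBlock a D j, (fun θ : ℕ → ℝ => θ i) ⁻¹' Set.Iio 0 := by
  ext θ
  simp only [Set.mem_ofPred_eq, Inactive, layerNeg, Set.mem_iUnion, Set.mem_iInter,
    Finset.mem_Icc, mem_layerBlock, Set.mem_preimage, Set.mem_Iio, exists_prop]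
  constructor
  · rintro ⟨j, hj, hjD, h⟩
    exact ⟨j, ⟨hj, by omega⟩, fun i hi => h i hi.1 hi.2⟩
  · rintro ⟨j, ⟨hj, hjD⟩, h⟩
    exact ⟨j, hj, by omega, fun i hi hi' =>
      h ⟨i, hi'.trans_le (layerSum_mono a (by omega))⟩ ⟨hi, hi'⟩⟩

lemma measurableSet_setOf_inactive : MeasurableSet {θ : ℕ → ℝ | Inactive a D θ} := by
  rw [setOf_inactive_eq]
  exact Finset.measurableSet_biUnion _ fun j _ => Finset.measurableSet_biInter _ fun i _ =>
    measurable_pi_apply _ measurableSet_Iio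

lemma measure_preimage_setOf_inactive {Ω : Type*} [MeasurableSpace Ω] {μ : Measure Ω}
    {X : Ω → ℕ → ℝ} (hX : Measurable X)
    (hcoord : iIndepFun (fun (i : Fin (layerSum a D)) ω => X ω i) μ) :
    μ (X ⁻¹' {θ | Inactive a D θ}) = 1 - ∏ j ∈ Finset.Icc 2 (D - 1),
      (1 - ∏ i ∈ Finset.Ico (layerSum a (j - 1)) (layerSum a j), μ {ω | X ω i < 0}) := by
  have hblocks : X ⁻¹' {θ | Inactive a D θ} = ⋃ j ∈ Finset.Icc 2 (D - 1),
      ⋂ i ∈ layerBlock a D j, (fun ω => X ω i) ⁻¹' Set.Iio 0 := by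
    rw [setOf_inactive_eq]
    simp only [Set.preimage_iUnion₂, Set.preimage_iInter₂]
    rfl
  have hdisj : (↑(Finset.Icc 2 (D - 1)) : Set ℕ).PairwiseDisjoint (layerBlock a D) :=
    (pairwiseDisjoint_layerBlock a D).subset fun j hj => by
      simp only [Finset.coe_Icc, Set.mem_Icc, Set.mem_Ici] at hj ⊢
      omega
  rw [hblocks, hcoord.measure_biUnion_biInter (fun i => (measurable_pi_apply _).comp hX)
    (fun _ => measurableSet_Iio) hdisj]
  refine congrArg (1 - ·) (Finset.prod_congr rfl fun j hj => ?_)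
  exact congrArg (1 - ·) (prod_layerBlock a D (fun i => μ {ω | X ω i < 0})
    (by rw [Finset.mem_Icc] at hj; omega))

end LayerBlocks

/-- With i.i.d. random initializations `Θ 1 0, …, Θ N 0` having independent coordinates,
and each trajectory evolving by gradient descent, the probability that all trajectories
lie in the inactive set `I_a` for all times equals
`(1 - ∏_{j=2}^{D-1} (1 - ∏_{i=k_{j-1}+1}^{k_j} P(Θ¹₀ᵢ < 0)))^N`. -/
theorem stmt8 {Ω : Type*} [MeasurableSpace Ω] (μ : Measure Ω) [IsProbabilityMeasure μ]
    (a : ℕ → ℕ) (D : ℕ) (haD : a D = 1)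
    (N : ℕ) (𝔠 : ℝ → ℝ)
    -- the empirical loss functionals, the losses on parameter space, and the gradients
    (F : ℕ → ℕ → Ω → ((Fin (a 0) → ℝ) → ℝ))
    (L : ℕ → ℕ → (ℕ → ℝ) → Ω → ℝ)
    (hL : ∀ n t θ ω, L n t θ ω = F n t ω (fun x => 𝔠 (realization a D θ x ⟨0, by omega⟩)))
    (G : ℕ → ℕ → (ℕ → ℝ) → Ω → ℕ → ℝ)
    (hG : ∀ n t (θ : ℕ → ℝ) (ω : Ω) (i : ℕ),
      DifferentiableAt ℝ (fun s => L n t (Function.update θ i s) ω) (θ i) →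
      G n t θ ω i = deriv (fun s => L n t (Function.update θ i s) ω) (θ i))
    -- the SGD trajectories
    (γ : ℕ → ℝ) (Θ : ℕ → ℕ → Ω → ℕ → ℝ)
    (hΘ : ∀ n t ω i, Θ n (t + 1) ω i = Θ n t ω i - γ (t + 1) * G n (t + 1) (Θ n t ω) ω i)
    -- the initializations are i.i.d. with independent coordinates
    (hmeas : ∀ n, Measurable (Θ n 0))
    (hindep : iIndepFun
      (fun (n : Fin N) ω => Θ (n.val + 1) 0 ω) μ)
    (hident : ∀ n, 1 ≤ n → n ≤ N → IdentDistrib (Θ n 0) (Θ 1 0) μ μ)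
    (hcoord : iIndepFun
      (fun (i : Fin (layerSum a D)) ω => Θ 1 0 ω i.val) μ) :
    μ {ω | ∀ n, 1 ≤ n → n ≤ N → ∀ t, Inactive a D (Θ n t ω)} =
      (1 - ∏ j ∈ Finset.Icc 2 (D - 1),
        (1 - ∏ i ∈ Finset.Ico (layerSum a (j - 1)) (layerSum a j),
          μ {ω | Θ 1 0 ω i < 0})) ^ N := by
  have hstep : ∀ n t ω, Inactive a D (Θ n t ω) → Inactive a D (Θ n (t + 1) ω) :=
    fun n t ω h => by
      rw [funext (hΘ n t ω)]
      exact h.gradient_step (ℓ := fun θ => L n (t + 1) θ ω)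
        (fun θ θ' hθ => by rw [hL, hL, hθ]) (hG n (t + 1) (Θ n t ω) ω) _
  have hevent : {ω | ∀ n, 1 ≤ n → n ≤ N → ∀ t, Inactive a D (Θ n t ω)} =
      ⋂ n : Fin N, (fun ω => Θ (n + 1) 0 ω) ⁻¹' {θ | Inactive a D θ} := by
    ext ω
    simp only [Set.mem_ofPred_eq, Set.mem_iInter, Set.mem_preimage]
    refine ⟨fun h n => h _ (by omega) n.isLt 0, fun h n hn hnN t => ?_⟩
    induction t with
    | zero => simpa [Nat.sub_add_cancel hn] using h ⟨n - 1, by omega⟩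
    | succ t ih => exact hstep n t ω ih
  rw [hevent, hindep.measure_iInter_preimage (fun n => hident _ (by omega) n.isLt)
    (measurableSet_setOf_inactive a D), Fintype.card_fin,
    measure_preimage_setOf_inactive a D (hmeas 1) hcoord]
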